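/- arXiv:2411.05417 — 4 statements merged into one kernel-verified Lean document; each statement's English description precedes it below -/
import Mathlib

section
/- Let V₁ and V₂ be real-valued random variables on a probability space, let C ≥ 0 satisfy P(|V₁| ≤ ε) ≤ 2εC for every ε > 0, and let β > 0. Then for every α > 0, E[ |𝟙_{V₁ < 0} − 𝟙_{V₂ < 0}|^α ] ≤ 2^{(2β+1)/(1+β)} · C^{β/(1+β)} · E[ |V₁ − V₂|^β ]^{1/(1+β)}. -/
/-!
On the event that `V₁` and `V₂` have different signs, `|V₁| ≤ |V₁ - V₂|`. Hence for every `ε > 0`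
that event lies in `{|V₁| ≤ ε} ∪ {ε ≤ |V₁ - V₂|}`, whose probability is at most
`2εC + E|V₁ - V₂|^β / ε^β` by the small-ball hypothesis and Markov's inequality. Choosing
`ε = (E|V₁ - V₂|^β / 2C)^(1/(1+β))` balances the two terms and gives the bound.
-/

open MeasureTheory ENNReal
open scoped symmDiff

lemma abs_le_abs_sub_of_xor_neg {a b : ℝ} (h : Xor (a < 0) (b < 0)) : |a| ≤ |a - b| := by
  rcases h with ⟨ha, hb⟩ | ⟨hb, ha⟩ <;> rw [not_lt] at *
  · rw [abs_of_neg ha, abs_of_neg (by linarith)]; linarith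
  · rw [abs_of_nonneg ha, abs_of_nonneg (by linarith)]; linarith

/-- The balancing choice `ε = (M / 2C)^(1/(1+β))` makes both terms equal to
`(2C)^(β/(1+β)) M^(1/(1+β))`. -/
lemma two_mul_mul_add_div_rpow_of_balanced {C M β : ℝ} (hC : 0 < C) (hM : 0 < M) (hβ : 0 < β) :
    2 * (M / (2 * C)) ^ (1 / (1 + β)) * C + M / ((M / (2 * C)) ^ (1 / (1 + β))) ^ β
      = 2 ^ ((2 * β + 1) / (1 + β)) * C ^ (β / (1 + β)) * M ^ (1 / (1 + β)) := by
  set p := 1 / (1 + β)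
  set q := β / (1 + β)
  have h2C : 0 < 2 * C := by positivity
  have hpq : p + q = 1 := by simp only [p, q]; field_simp
  have hpβ : p * β = q := by simp only [p, q]; field_simp
  have hterm₁ : 2 * (M / (2 * C)) ^ p * C = (2 * C) ^ q * M ^ p := by
    rw [Real.div_rpow hM.le h2C.le, show q = 1 - p by linarith, Real.rpow_sub h2C, Real.rpow_one]
    field_simp
  have hterm₂ : M / ((M / (2 * C)) ^ p) ^ β = (2 * C) ^ q * M ^ p := by
    rw [← Real.rpow_mul (by positivity), hpβ, Real.div_rpow hM.le h2C.le,
      show p = 1 - q by linarith, Real.rpow_sub hM, Real.rpow_one]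
    field_simp
  have hexp : (2 * β + 1) / (1 + β) = 1 + q := by simp only [q]; field_simp; ring
  rw [hterm₁, hterm₂, hexp, Real.rpow_add two_pos, Real.rpow_one, Real.mul_rpow zero_le_two hC.le]
  ring

lemma ENNReal.eq_zero_of_forall_le_ofReal_mul {p : ℝ≥0∞} {C : ℝ} (hC : 0 < C)
    (h : ∀ ε : ℝ, 0 < ε → p ≤ ENNReal.ofReal (ε * C)) : p = 0 := by
  refine nonpos_iff_eq_zero.mp (ENNReal.le_of_forall_pos_le_add fun δ hδ _ => ?_)
  simpa [div_mul_cancel₀ _ hC.ne'] using h (δ / C) (by positivity)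

lemma ENNReal.le_of_forall_le_add_div_rpow {p m : ℝ≥0∞} {C β : ℝ} (hC : 0 < C) (hβ : 0 < β)
    (h : ∀ ε : ℝ, 0 < ε → p ≤ ENNReal.ofReal (2 * ε * C) + m / ENNReal.ofReal (ε ^ β)) :
    p ≤ ENNReal.ofReal (2 ^ ((2 * β + 1) / (1 + β)) * C ^ (β / (1 + β))) * m ^ (1 / (1 + β)) := by
  have hp : 0 < 1 / (1 + β) := by positivity
  rcases eq_top_or_lt_top m with rfl | hm
  · rw [ENNReal.top_rpow_of_pos hp, ENNReal.mul_top (by simpa using by positivity)]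
    exact le_top
  obtain ⟨M, hM, rfl⟩ : ∃ M : ℝ, 0 ≤ M ∧ m = ENNReal.ofReal M :=
    ⟨m.toReal, toReal_nonneg, (ofReal_toReal hm.ne).symm⟩
  rcases hM.eq_or_lt with rfl | hM
  · have : p = 0 := ENNReal.eq_zero_of_forall_le_ofReal_mul (by positivity : 0 < 2 * C)
      fun ε hε => by simpa [mul_comm, mul_left_comm] using h ε hε
    simp [this]
  set ε := (M / (2 * C)) ^ (1 / (1 + β))
  have hε : 0 < ε := by positivity
  calc p ≤ ENNReal.ofReal (2 * ε * C) + ENNReal.ofReal M / ENNReal.ofReal (ε ^ β) := h ε hε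
    _ = ENNReal.ofReal (2 * ε * C + M / ε ^ β) := by
      rw [← ofReal_div_of_pos (by positivity), ofReal_add (by positivity) (by positivity)]
    _ = _ := by
      rw [two_mul_mul_add_div_rpow_of_balanced hC hM hβ, ofReal_mul (by positivity),
        ofReal_rpow_of_pos hM]

section

variable {Ω : Type*} [MeasurableSpace Ω] {μ : Measure Ω}

lemma pos_of_forall_measure_abs_le_le [NeZero μ] {f : Ω → ℝ} {C : ℝ}
    (h : ∀ ε : ℝ, 0 < ε → μ {ω | |f ω| ≤ ε} ≤ ENNReal.ofReal (2 * ε * C)) : 0 < C := by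
  by_contra! hC
  have hnull : ∀ n : ℕ, μ {ω | |f ω| ≤ n + 1} = 0 := fun n =>
    nonpos_iff_eq_zero.mp <| (h _ (by positivity)).trans_eq <|
      ofReal_eq_zero.mpr (mul_nonpos_of_nonneg_of_nonpos (by positivity) hC)
  have hcover : ⋃ n : ℕ, {ω | |f ω| ≤ n + 1} = Set.univ :=
    Set.eq_univ_of_forall fun ω => Set.mem_iUnion.mpr
      ⟨⌈|f ω|⌉₊, show |f ω| ≤ _ from (Nat.le_ceil _).trans (le_add_of_nonneg_right zero_le_one)⟩
  exact NeZero.ne μ (Measure.measure_univ_eq_zero.mp (hcover ▸ measure_iUnion_null hnull))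

lemma measure_le_abs_le_lintegral_rpow_div {f : Ω → ℝ} (hf : AEMeasurable f μ)
    {β ε : ℝ} (hβ : 0 < β) (hε : 0 < ε) :
    μ {ω | ε ≤ |f ω|} ≤ (∫⁻ ω, ENNReal.ofReal (|f ω| ^ β) ∂μ) / ENNReal.ofReal (ε ^ β) := by
  calc μ {ω | ε ≤ |f ω|}
      ≤ μ {ω | ENNReal.ofReal (ε ^ β) ≤ ENNReal.ofReal (|f ω| ^ β)} :=
        measure_mono fun ω hω => ofReal_le_ofReal (Real.rpow_le_rpow hε.le hω hβ.le)
    _ ≤ _ := meas_ge_le_lintegral_div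
        ((Real.continuous_rpow_const hβ.le).measurable.comp_aemeasurable hf.abs).ennreal_ofReal
        (by simpa using by positivity) ofReal_ne_top

lemma measure_symmDiff_neg_le (f g : Ω → ℝ) (ε : ℝ) :
    μ ({ω | f ω < 0} ∆ {ω | g ω < 0}) ≤ μ {ω | |f ω| ≤ ε} + μ {ω | ε ≤ |f ω - g ω|} := by
  refine (measure_mono fun ω hω => ?_).trans (measure_union_le _ _)
  have hsub := abs_le_abs_sub_of_xor_neg (Set.mem_symmDiff.mp hω)
  by_cases hf : |f ω| ≤ ε
  · exact Or.inl hf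
  · exact Or.inr (le_trans (not_le.mp hf).le hsub)

lemma lintegral_abs_sub_ite_neg_rpow {f g : Ω → ℝ} (hf : Measurable f) (hg : Measurable g)
    {α : ℝ} (hα : 0 < α) :
    ∫⁻ ω, ENNReal.ofReal
        (|(if f ω < 0 then (1 : ℝ) else 0) - (if g ω < 0 then (1 : ℝ) else 0)| ^ α) ∂μ
      = μ ({ω | f ω < 0} ∆ {ω | g ω < 0}) := by
  rw [← lintegral_indicator_one
    ((measurableSet_lt hf measurable_const).symmDiff (measurableSet_lt hg measurable_const))]
  refine lintegral_congr fun ω => ?_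
  by_cases hfω : f ω < 0 <;> by_cases hgω : g ω < 0 <;>
    simp [Set.indicator, Set.mem_symmDiff, hfω, hgω, Real.zero_rpow hα.ne']

end

theorem avikainen_estimate_general
    {Ω : Type*} [MeasurableSpace Ω] (ℙ : Measure Ω) [IsProbabilityMeasure ℙ]
    (V₁ V₂ : Ω → ℝ) (hV₁ : Measurable V₁) (hV₂ : Measurable V₂)
    (C : ℝ)
    (hsmall : ∀ ε : ℝ, 0 < ε → ℙ {ω | |V₁ ω| ≤ ε} ≤ ENNReal.ofReal (2 * ε * C))
    (β : ℝ) (hβ : 0 < β) (α : ℝ) (hα : 0 < α) :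
    ∫⁻ ω, ENNReal.ofReal
        (|(if V₁ ω < 0 then (1 : ℝ) else 0) - (if V₂ ω < 0 then (1 : ℝ) else 0)| ^ α) ∂ℙ
      ≤ ENNReal.ofReal (2 ^ ((2 * β + 1) / (1 + β)) * C ^ (β / (1 + β)))
        * (∫⁻ ω, ENNReal.ofReal (|V₁ ω - V₂ ω| ^ β) ∂ℙ) ^ (1 / (1 + β)) := by
  rw [lintegral_abs_sub_ite_neg_rpow hV₁ hV₂ hα]
  refine ENNReal.le_of_forall_le_add_div_rpow (pos_of_forall_measure_abs_le_le hsmall) hβ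
    fun ε hε => ?_
  calc ℙ ({ω | V₁ ω < 0} ∆ {ω | V₂ ω < 0})
      ≤ ℙ {ω | |V₁ ω| ≤ ε} + ℙ {ω | ε ≤ |V₁ ω - V₂ ω|} := measure_symmDiff_neg_le V₁ V₂ ε
    _ ≤ _ := add_le_add (hsmall ε hε)
        (measure_le_abs_le_lintegral_rpow_div (hV₁.sub hV₂).aemeasurable hβ hε)

/-- Avikainen-type estimate: if `P(|V₁| ≤ ε) ≤ 2εC` for all `ε > 0`, then for all `α, β > 0`,
`E[|𝟙_{V₁<0} - 𝟙_{V₂<0}|^α] ≤ 2^((2β+1)/(1+β)) C^(β/(1+β)) E[|V₁ - V₂|^β]^(1/(1+β))`. -/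
theorem avikainen_estimate
    {Ω : Type*} [MeasurableSpace Ω] (ℙ : Measure Ω) [IsProbabilityMeasure ℙ]
    (V₁ V₂ : Ω → ℝ) (hV₁ : Measurable V₁) (hV₂ : Measurable V₂)
    (C : ℝ) (hC : 0 ≤ C)
    (hsmall : ∀ ε : ℝ, 0 < ε → ℙ {ω | |V₁ ω| ≤ ε} ≤ ENNReal.ofReal (2 * ε * C))
    (β : ℝ) (hβ : 0 < β) (α : ℝ) (hα : 0 < α) :
    ∫⁻ ω, ENNReal.ofReal
        (|(if V₁ ω < 0 then (1 : ℝ) else 0) - (if V₂ ω < 0 then (1 : ℝ) else 0)| ^ α) ∂ℙ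
      ≤ ENNReal.ofReal (2 ^ ((2 * β + 1) / (1 + β)) * C ^ (β / (1 + β)))
        * (∫⁻ ω, ENNReal.ofReal (|V₁ ω - V₂ ω| ^ β) ∂ℙ) ^ (1 / (1 + β)) :=
  avikainen_estimate_general ℙ V₁ V₂ hV₁ hV₂ C hsmall β hβ α hα
end

section
/- Let 𝒳 ⊆ ℝ^d be a nonempty closed convex set, ν ∈ (0, 1], L > 0, and let f : ℝ^d → ℝ be differentiable with ‖∇f(y) − ∇f(x)‖ ≤ L‖y − x‖^ν for all x, y ∈ 𝒳. Let x ∈ 𝒳, γ > 0, and G ∈ ℝ^d. Let x⁺ be the Euclidean projection of x − γG onto 𝒳 and set g̃ := (x − x⁺)/γ; let x• be the Euclidean projection of x − γ∇f(x) onto 𝒳 and set g := (x − x•)/γ. Then f(x⁺) ≤ f(x) − γ‖g̃‖² − γ⟨∇f(x) − G, g⟩ + γ‖∇f(x) − G‖² + (L γ^{1+ν}/(1+ν)) ‖G‖^{1+ν}. -/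
/-! Along the segment from `x` to `x⁺` the Hölder bound on `∇f` keeps `f` within
`L/(1+ν) ‖x⁺ - x‖^(1+ν)` of its linearization at `x`. The variational inequality of the
projection gives `‖x⁺ - x‖² ≤ γ⟪G, x - x⁺⟫` (hence `‖x⁺ - x‖ ≤ γ‖G‖`) and, comparing the two
projections, `‖x⁺ - x•‖ ≤ γ‖∇f(x) - G‖`. Splitting
`⟪∇f(x), x⁺ - x⟫ = -⟪G, x - x⁺⟫ - ⟪∇f(x) - G, x - x•⟫ + ⟪∇f(x) - G, x⁺ - x•⟫`
and applying Cauchy–Schwarz to the last term gives the claim. -/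

open InnerProductSpace Set

variable {E : Type*} [NormedAddCommGroup E] [InnerProductSpace ℝ E]

theorem norm_sq_sub_le_inner_of_forall_inner_sub_nonpos {s : Set E} {z₁ z₂ p₁ p₂ : E}
    (hp₁ : p₁ ∈ s) (hp₂ : p₂ ∈ s) (h₁ : ∀ y ∈ s, ⟪z₁ - p₁, y - p₁⟫_ℝ ≤ 0)
    (h₂ : ∀ y ∈ s, ⟪z₂ - p₂, y - p₂⟫_ℝ ≤ 0) :
    ‖p₁ - p₂‖ ^ 2 ≤ ⟪z₁ - z₂, p₁ - p₂⟫_ℝ := by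
  have e : z₁ - z₂ = (z₁ - p₁) - (z₂ - p₂) + (p₁ - p₂) := by abel
  have h₁' := h₁ p₂ hp₂
  have h₂' := h₂ p₁ hp₁
  rw [← neg_sub p₁ p₂, inner_neg_right] at h₁'
  rw [e, inner_add_left, inner_sub_left, real_inner_self_eq_norm_sq]
  linarith

theorem norm_sub_le_of_forall_inner_sub_nonpos {s : Set E} {z₁ z₂ p₁ p₂ : E}
    (hp₁ : p₁ ∈ s) (hp₂ : p₂ ∈ s) (h₁ : ∀ y ∈ s, ⟪z₁ - p₁, y - p₁⟫_ℝ ≤ 0)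
    (h₂ : ∀ y ∈ s, ⟪z₂ - p₂, y - p₂⟫_ℝ ≤ 0) :
    ‖p₁ - p₂‖ ≤ ‖z₁ - z₂‖ := by
  have h := (norm_sq_sub_le_inner_of_forall_inner_sub_nonpos hp₁ hp₂ h₁ h₂).trans
    (real_inner_le_norm _ _)
  rw [sq] at h
  rcases (norm_nonneg (p₁ - p₂)).eq_or_lt with h0 | h0
  · rw [← h0]; positivity
  · exact le_of_mul_le_mul_right h h0

section ProjectedStep

variable {s : Set E} {x p G : E} {γ : ℝ}

theorem norm_sq_sub_le_mul_inner_of_projected_step (hx : x ∈ s) (hp : p ∈ s)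
    (h : ∀ y ∈ s, ⟪(x - γ • G) - p, y - p⟫_ℝ ≤ 0) :
    ‖p - x‖ ^ 2 ≤ γ * ⟪G, x - p⟫_ℝ := by
  have h := norm_sq_sub_le_inner_of_forall_inner_sub_nonpos (z₂ := x) hp hx h (by simp)
  rwa [sub_sub_cancel_left, inner_neg_left, ← inner_neg_right, neg_sub,
    real_inner_smul_left] at h

theorem norm_sub_le_mul_norm_of_projected_step (hγ : 0 ≤ γ) (hx : x ∈ s) (hp : p ∈ s)
    (h : ∀ y ∈ s, ⟪(x - γ • G) - p, y - p⟫_ℝ ≤ 0) :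
    ‖p - x‖ ≤ γ * ‖G‖ := by
  simpa [norm_smul, abs_of_nonneg hγ] using
    norm_sub_le_of_forall_inner_sub_nonpos (z₂ := x) hp hx h (by simp)

theorem norm_sub_le_mul_norm_sub_of_projected_steps {p₁ p₂ G₁ G₂ : E} (hγ : 0 ≤ γ)
    (hp₁ : p₁ ∈ s) (hp₂ : p₂ ∈ s) (h₁ : ∀ y ∈ s, ⟪(x - γ • G₁) - p₁, y - p₁⟫_ℝ ≤ 0)
    (h₂ : ∀ y ∈ s, ⟪(x - γ • G₂) - p₂, y - p₂⟫_ℝ ≤ 0) :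
    ‖p₁ - p₂‖ ≤ γ * ‖G₁ - G₂‖ := by
  have h := norm_sub_le_of_forall_inner_sub_nonpos hp₁ hp₂ h₁ h₂
  rwa [show x - γ • G₁ - (x - γ • G₂) = γ • (G₂ - G₁) by module, norm_smul,
    Real.norm_of_nonneg hγ, norm_sub_rev G₂] at h

end ProjectedStep

variable [CompleteSpace E]

theorem DifferentiableAt.hasDerivAt_add_smul {f : E → ℝ} {x v : E} {t : ℝ}
    (hf : DifferentiableAt ℝ f (x + t • v)) :
    HasDerivAt (fun t : ℝ => f (x + t • v)) ⟪gradient f (x + t • v), v⟫_ℝ t := by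
  have hline : HasDerivAt (fun t : ℝ => x + t • v) v t := by
    simpa using ((hasDerivAt_id t).smul_const v).const_add x
  rw [inner_gradient_left]
  exact hf.hasFDerivAt.comp_hasDerivAt t hline

theorem Convex.le_add_inner_gradient_add_rpow {s : Set E} (hs : Convex ℝ s) {f : E → ℝ}
    (hf : ∀ z ∈ s, DifferentiableAt ℝ f z) {L ν : ℝ} (hν : 0 ≤ ν)
    (hHolder : ∀ x ∈ s, ∀ y ∈ s, ‖gradient f y - gradient f x‖ ≤ L * ‖y - x‖ ^ ν)
    {x y : E} (hx : x ∈ s) (hy : y ∈ s) :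
    f y ≤ f x + ⟪gradient f x, y - x⟫_ℝ + L / (1 + ν) * ‖y - x‖ ^ (1 + ν) := by
  set v := y - x
  have hν₁ : 0 < 1 + ν := by linarith
  have hseg : ∀ t ∈ Icc (0 : ℝ) 1, x + t • v ∈ s := fun t ht => hs.add_smul_sub_mem hx hy ht
  have hfline {t : ℝ} (ht : t ∈ Icc (0 : ℝ) 1) :
      HasDerivAt (fun t : ℝ => f (x + t • v)) ⟪gradient f (x + t • v), v⟫_ℝ t :=
    (hf _ (hseg t ht)).hasDerivAt_add_smul
  -- the claim is `g 1 ≤ g 0`, and the Hölder bound makes `g` antitone on `[0, 1]`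
  let g : ℝ → ℝ := fun t =>
    f (x + t • v) - t * ⟪gradient f x, v⟫_ℝ - L / (1 + ν) * ‖v‖ ^ (1 + ν) * t ^ (1 + ν)
  have hg (t : ℝ) (ht : t ∈ Ioo (0 : ℝ) 1) : HasDerivAt g
      (⟪gradient f (x + t • v) - gradient f x, v⟫_ℝ - L * ‖v‖ ^ (1 + ν) * t ^ ν) t := by
    have hpow := Real.hasDerivAt_rpow_const (p := 1 + ν) (Or.inl ht.1.ne')
    refine (((hfline (Ioo_subset_Icc_self ht)).sub ((hasDerivAt_id t).mul_const _)).sub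
      (hpow.const_mul (L / (1 + ν) * ‖v‖ ^ (1 + ν)))).congr_deriv ?_
    rw [inner_sub_left, add_sub_cancel_left, one_mul]
    field_simp
  have hg_nonpos (t : ℝ) (ht : t ∈ Ioo (0 : ℝ) 1) :
      ⟪gradient f (x + t • v) - gradient f x, v⟫_ℝ - L * ‖v‖ ^ (1 + ν) * t ^ ν ≤ 0 := by
    have hH := hHolder x hx _ (hseg t (Ioo_subset_Icc_self ht))
    rw [add_sub_cancel_left, norm_smul, Real.norm_of_nonneg ht.1.le,
      Real.mul_rpow ht.1.le (norm_nonneg _)] at hH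
    rw [sub_nonpos]
    calc ⟪gradient f (x + t • v) - gradient f x, v⟫_ℝ
        ≤ ‖gradient f (x + t • v) - gradient f x‖ * ‖v‖ := real_inner_le_norm _ _
      _ ≤ L * (t ^ ν * ‖v‖ ^ ν) * ‖v‖ := by gcongr
      _ = L * ‖v‖ ^ (1 + ν) * t ^ ν := by
        rw [Real.rpow_one_add' (norm_nonneg _) hν₁.ne']; ring
  have hcont : ContinuousOn g (Icc 0 1) :=
    .sub (.sub (fun t ht => (hfline ht).continuousAt.continuousWithinAt) (by fun_prop))
      ((Real.continuous_rpow_const hν₁.le).const_mul _).continuousOn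
  have hanti : AntitoneOn g (Icc 0 1) := by
    refine antitoneOn_of_deriv_nonpos (convex_Icc 0 1) hcont (fun t ht => ?_) (fun t ht => ?_) <;>
      rw [interior_Icc] at ht
    · exact (hg t ht).differentiableAt.differentiableWithinAt
    · exact (hg t ht).deriv ▸ hg_nonpos t ht
  have h01 := hanti (left_mem_Icc.2 zero_le_one) (right_mem_Icc.2 zero_le_one) zero_le_one
  simp only [g, zero_smul, add_zero, one_smul, zero_mul, sub_zero, Real.zero_rpow hν₁.ne',
    mul_zero, Real.one_rpow, one_mul, mul_one] at h01
  rw [show x + v = y from add_sub_cancel x y] at h01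
  linarith

theorem one_step_descent_general
    {d : ℕ} (𝒳 : Set (EuclideanSpace ℝ (Fin d)))
    (h𝒳conv : Convex ℝ 𝒳)
    (ν : ℝ) (hν : ν ∈ Set.Ioc (0 : ℝ) 1) (L : ℝ) (hL : 0 < L)
    (f : EuclideanSpace ℝ (Fin d) → ℝ) (hf : Differentiable ℝ f)
    (hHolder : ∀ x ∈ 𝒳, ∀ y ∈ 𝒳, ‖gradient f y - gradient f x‖ ≤ L * ‖y - x‖ ^ ν)
    (x : EuclideanSpace ℝ (Fin d)) (hx : x ∈ 𝒳) (γ : ℝ) (hγ : 0 < γ)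
    (G : EuclideanSpace ℝ (Fin d))
    (xplus : EuclideanSpace ℝ (Fin d)) (hxplus : xplus ∈ 𝒳)
    (hprojplus : ∀ y ∈ 𝒳, ⟪(x - γ • G) - xplus, y - xplus⟫_ℝ ≤ 0)
    (xdot : EuclideanSpace ℝ (Fin d)) (hxdot : xdot ∈ 𝒳)
    (hprojdot : ∀ y ∈ 𝒳, ⟪(x - γ • gradient f x) - xdot, y - xdot⟫_ℝ ≤ 0) :
    f xplus ≤ f x - γ * ‖γ⁻¹ • (x - xplus)‖ ^ 2
      - γ * ⟪gradient f x - G, γ⁻¹ • (x - xdot)⟫_ℝ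
      + γ * ‖gradient f x - G‖ ^ 2
      + L * γ ^ (1 + ν) / (1 + ν) * ‖G‖ ^ (1 + ν) := by
  set u := gradient f x
  have hdescent := h𝒳conv.le_add_inner_gradient_add_rpow (fun z _ => hf z) hν.1.le hHolder
    hx hxplus
  have hstep_sq := norm_sq_sub_le_mul_inner_of_projected_step hx hxplus hprojplus
  have hstep := norm_sub_le_mul_norm_of_projected_step hγ.le hx hxplus hprojplus
  have hinner : ⟪u - G, xplus - xdot⟫_ℝ ≤ γ * ‖u - G‖ ^ 2 := by
    have h := norm_sub_le_mul_norm_sub_of_projected_steps hγ.le hxplus hxdot hprojplus hprojdot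
    rw [norm_sub_rev G] at h
    nlinarith [real_inner_le_norm (u - G) (xplus - xdot), norm_nonneg (u - G)]
  have hholder_term : L / (1 + ν) * ‖xplus - x‖ ^ (1 + ν)
      ≤ L * γ ^ (1 + ν) / (1 + ν) * ‖G‖ ^ (1 + ν) := by
    have hν₁ : 0 < 1 + ν := by linarith [hν.1]
    calc _ ≤ L / (1 + ν) * (γ * ‖G‖) ^ (1 + ν) := by gcongr
      _ = _ := by rw [Real.mul_rpow hγ.le (norm_nonneg _)]; ring
  have hsplit : ⟪u, xplus - x⟫_ℝ
      = -⟪G, x - xplus⟫_ℝ - ⟪u - G, x - xdot⟫_ℝ + ⟪u - G, xplus - xdot⟫_ℝ := by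
    simp only [inner_sub_left, inner_sub_right]; ring
  have hnorm : γ * ‖γ⁻¹ • (x - xplus)‖ ^ 2 ≤ ⟪G, x - xplus⟫_ℝ := by
    rw [norm_smul, norm_inv, Real.norm_of_nonneg hγ.le, norm_sub_rev]
    field_simp
    exact hstep_sq
  rw [real_inner_smul_right, ← mul_assoc, mul_inv_cancel₀ hγ.ne', one_mul]
  linarith

/-- One-step descent inequality of the stochastic projected gradient iteration: with
`x⁺ = proj_𝒳(x - γG)`, `g̃ = (x - x⁺)/γ`, `x• = proj_𝒳(x - γ∇f(x))`, `g = (x - x•)/γ`,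
`f(x⁺) ≤ f(x) - γ‖g̃‖² - γ⟪∇f(x) - G, g⟫ + γ‖∇f(x) - G‖² + (Lγ^(1+ν)/(1+ν))‖G‖^(1+ν)`. -/
theorem one_step_descent
    {d : ℕ} (𝒳 : Set (EuclideanSpace ℝ (Fin d)))
    (h𝒳ne : 𝒳.Nonempty) (h𝒳closed : IsClosed 𝒳) (h𝒳conv : Convex ℝ 𝒳)
    (ν : ℝ) (hν : ν ∈ Set.Ioc (0 : ℝ) 1) (L : ℝ) (hL : 0 < L)
    (f : EuclideanSpace ℝ (Fin d) → ℝ) (hf : Differentiable ℝ f)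
    (hHolder : ∀ x ∈ 𝒳, ∀ y ∈ 𝒳, ‖gradient f y - gradient f x‖ ≤ L * ‖y - x‖ ^ ν)
    (x : EuclideanSpace ℝ (Fin d)) (hx : x ∈ 𝒳) (γ : ℝ) (hγ : 0 < γ)
    (G : EuclideanSpace ℝ (Fin d))
    (xplus : EuclideanSpace ℝ (Fin d)) (hxplus : xplus ∈ 𝒳)
    (hprojplus : ∀ y ∈ 𝒳, ⟪(x - γ • G) - xplus, y - xplus⟫_ℝ ≤ 0)
    (xdot : EuclideanSpace ℝ (Fin d)) (hxdot : xdot ∈ 𝒳)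
    (hprojdot : ∀ y ∈ 𝒳, ⟪(x - γ • gradient f x) - xdot, y - xdot⟫_ℝ ≤ 0) :
    f xplus ≤ f x - γ * ‖γ⁻¹ • (x - xplus)‖ ^ 2
      - γ * ⟪gradient f x - G, γ⁻¹ • (x - xdot)⟫_ℝ
      + γ * ‖gradient f x - G‖ ^ 2
      + L * γ ^ (1 + ν) / (1 + ν) * ‖G‖ ^ (1 + ν) :=
  one_step_descent_general 𝒳 h𝒳conv ν hν L hL f hf hHolder x hx γ hγ G xplus hxplus hprojplus xdot
    hxdot hprojdot
end

section
/- Let 𝒳 ⊆ ℝ^d be a nonempty closed convex set, ν ∈ (0, 1], L > 0, and let f : ℝ^d → ℝ be differentiable with ‖∇f(y) − ∇f(x)‖ ≤ L‖y − x‖^ν for all x, y ∈ 𝒳. Let x ∈ 𝒳, γ > 0, G ∈ ℝ^d, let x⁺ be the Euclidean projection of x − γG onto 𝒳, and set g̃ := (x − x⁺)/γ and v := (x − x⁺)/γ + ∇f(x⁺) − G. Then: (i) the vector v − ∇f(x⁺) = (x − x⁺)/γ − G lies in the normal cone of 𝒳 at x⁺, i.e. ⟨(x − x⁺)/γ − G,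 y − x⁺⟩ ≤ 0 for all y ∈ 𝒳; and (ii) ‖v‖ ≤ ‖g̃‖ + L γ^ν ‖g̃‖^ν + ‖∇f(x) − G‖. In particular, the distance from 0 to the set ∇f(x⁺) + N_𝒳(x⁺) is at most ‖g̃‖ + L γ^ν ‖g̃‖^ν + ‖∇f(x) − G‖. -/
open InnerProductSpace

/-!
Rescaling the variational inequality of the projection by `γ⁻¹` gives (i). For (ii), split
`v = g̃ + (∇f(x⁺) - ∇f(x)) + (∇f(x) - G)`; the middle term is controlled by Hölder continuity
since `‖x⁺ - x‖ = γ ‖g̃‖`. As `v ∈ ∇f(x⁺) + N_𝒳(x⁺)` by (i), its norm bounds the distance in (iii).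
-/

section

variable {E : Type*} [NormedAddCommGroup E] [InnerProductSpace ℝ E]

theorem sub_smul_sub_eq_smul_inv_smul_sub {γ : ℝ} (hγ : γ ≠ 0) (x p G : E) :
    (x - γ • G) - p = γ • (γ⁻¹ • (x - p) - G) := by
  rw [smul_sub, smul_smul, mul_inv_cancel₀ hγ, one_smul]
  abel

theorem inner_inv_smul_sub_sub_nonpos {γ : ℝ} (hγ : 0 < γ) {x p G y : E}
    (hproj : ⟪(x - γ • G) - p, y - p⟫_ℝ ≤ 0) :
    ⟪γ⁻¹ • (x - p) - G, y - p⟫_ℝ ≤ 0 := by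
  rw [sub_smul_sub_eq_smul_inv_smul_sub hγ.ne', real_inner_smul_left] at hproj
  exact nonpos_of_mul_nonpos_right hproj hγ

end

section

variable {E : Type*} [NormedAddCommGroup E] [NormedSpace ℝ E]

theorem norm_sub_rpow_eq_rpow_mul_norm_inv_smul_rpow {γ : ℝ} (hγ : 0 < γ) (x p : E) (ν : ℝ) :
    ‖p - x‖ ^ ν = γ ^ ν * ‖γ⁻¹ • (x - p)‖ ^ ν := by
  rw [← Real.mul_rpow hγ.le (norm_nonneg _), norm_smul, Real.norm_of_nonneg (inv_pos.2 hγ).le,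
    mul_inv_cancel_left₀ hγ.ne', norm_sub_rev]

end

theorem norm_add_sub_le_norm_add_norm_sub_add_norm_sub {E : Type*} [SeminormedAddCommGroup E]
    (g a b G : E) : ‖g + a - G‖ ≤ ‖g‖ + ‖a - b‖ + ‖b - G‖ :=
  calc ‖g + a - G‖ = ‖g + (a - b) + (b - G)‖ := by congr 1; abel
    _ ≤ ‖g‖ + ‖a - b‖ + ‖b - G‖ := norm_add₃_le

theorem normal_cone_stationarity_bound_general
    {d : ℕ} (𝒳 : Set (EuclideanSpace ℝ (Fin d)))
    (ν : ℝ) (L : ℝ)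
    (f : EuclideanSpace ℝ (Fin d) → ℝ)
    (hHolder : ∀ x ∈ 𝒳, ∀ y ∈ 𝒳, ‖gradient f y - gradient f x‖ ≤ L * ‖y - x‖ ^ ν)
    (x : EuclideanSpace ℝ (Fin d)) (hx : x ∈ 𝒳) (γ : ℝ) (hγ : 0 < γ)
    (G : EuclideanSpace ℝ (Fin d))
    (xplus : EuclideanSpace ℝ (Fin d)) (hxplus : xplus ∈ 𝒳)
    (hproj : ∀ y ∈ 𝒳, ⟪(x - γ • G) - xplus, y - xplus⟫_ℝ ≤ 0) :
    (∀ y ∈ 𝒳, ⟪γ⁻¹ • (x - xplus) - G, y - xplus⟫_ℝ ≤ 0)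
    ∧ ‖γ⁻¹ • (x - xplus) + gradient f xplus - G‖
        ≤ ‖γ⁻¹ • (x - xplus)‖ + L * γ ^ ν * ‖γ⁻¹ • (x - xplus)‖ ^ ν
          + ‖gradient f x - G‖
    ∧ Metric.infDist (0 : EuclideanSpace ℝ (Fin d))
        {v | ∃ u, (∀ y ∈ 𝒳, ⟪u, y - xplus⟫_ℝ ≤ 0) ∧ v = gradient f xplus + u}
        ≤ ‖γ⁻¹ • (x - xplus)‖ + L * γ ^ ν * ‖γ⁻¹ • (x - xplus)‖ ^ ν
          + ‖gradient f x - G‖ := by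
  have normal : ∀ y ∈ 𝒳, ⟪γ⁻¹ • (x - xplus) - G, y - xplus⟫_ℝ ≤ 0 := fun y hy ↦
    inner_inv_smul_sub_sub_nonpos hγ (hproj y hy)
  have holder : ‖gradient f xplus - gradient f x‖
      ≤ L * γ ^ ν * ‖γ⁻¹ • (x - xplus)‖ ^ ν := by
    simpa only [norm_sub_rpow_eq_rpow_mul_norm_inv_smul_rpow hγ, mul_assoc]
      using hHolder x hx xplus hxplus
  have bound : ‖γ⁻¹ • (x - xplus) + gradient f xplus - G‖
      ≤ ‖γ⁻¹ • (x - xplus)‖ + L * γ ^ ν * ‖γ⁻¹ • (x - xplus)‖ ^ ν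
        + ‖gradient f x - G‖ :=
    (norm_add_sub_le_norm_add_norm_sub_add_norm_sub _ _ (gradient f x) _).trans
      (by gcongr)
  refine ⟨normal, bound, ?_⟩
  have mem : γ⁻¹ • (x - xplus) + gradient f xplus - G
      ∈ {v | ∃ u, (∀ y ∈ 𝒳, ⟪u, y - xplus⟫_ℝ ≤ 0) ∧ v = gradient f xplus + u} :=
    ⟨_, normal, by abel⟩
  calc Metric.infDist 0 _ ≤ dist 0 (γ⁻¹ • (x - xplus) + gradient f xplus - G) :=
        Metric.infDist_le_dist_of_mem mem
    _ = ‖γ⁻¹ • (x - xplus) + gradient f xplus - G‖ := dist_zero_left _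
    _ ≤ _ := bound

/-- Stationarity-measure bound for a projected step: with `x⁺ = proj_𝒳(x - γG)`,
`g̃ = (x - x⁺)/γ` and `v = (x - x⁺)/γ + ∇f(x⁺) - G`, (i) `v - ∇f(x⁺)` lies in the normal
cone of `𝒳` at `x⁺`, (ii) `‖v‖ ≤ ‖g̃‖ + Lγ^ν‖g̃‖^ν + ‖∇f(x) - G‖`, and in particular
`dist(0, ∇f(x⁺) + N_𝒳(x⁺)) ≤ ‖g̃‖ + Lγ^ν‖g̃‖^ν + ‖∇f(x) - G‖`. -/
theorem normal_cone_stationarity_bound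
    {d : ℕ} (𝒳 : Set (EuclideanSpace ℝ (Fin d)))
    (h𝒳ne : 𝒳.Nonempty) (h𝒳closed : IsClosed 𝒳) (h𝒳conv : Convex ℝ 𝒳)
    (ν : ℝ) (hν : ν ∈ Set.Ioc (0 : ℝ) 1) (L : ℝ) (hL : 0 < L)
    (f : EuclideanSpace ℝ (Fin d) → ℝ) (hf : Differentiable ℝ f)
    (hHolder : ∀ x ∈ 𝒳, ∀ y ∈ 𝒳, ‖gradient f y - gradient f x‖ ≤ L * ‖y - x‖ ^ ν)
    (x : EuclideanSpace ℝ (Fin d)) (hx : x ∈ 𝒳) (γ : ℝ) (hγ : 0 < γ)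
    (G : EuclideanSpace ℝ (Fin d))
    (xplus : EuclideanSpace ℝ (Fin d)) (hxplus : xplus ∈ 𝒳)
    (hproj : ∀ y ∈ 𝒳, ⟪(x - γ • G) - xplus, y - xplus⟫_ℝ ≤ 0) :
    (∀ y ∈ 𝒳, ⟪γ⁻¹ • (x - xplus) - G, y - xplus⟫_ℝ ≤ 0)
    ∧ ‖γ⁻¹ • (x - xplus) + gradient f xplus - G‖
        ≤ ‖γ⁻¹ • (x - xplus)‖ + L * γ ^ ν * ‖γ⁻¹ • (x - xplus)‖ ^ ν
          + ‖gradient f x - G‖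
    ∧ Metric.infDist (0 : EuclideanSpace ℝ (Fin d))
        {v | ∃ u, (∀ y ∈ 𝒳, ⟪u, y - xplus⟫_ℝ ≤ 0) ∧ v = gradient f xplus + u}
        ≤ ‖γ⁻¹ • (x - xplus)‖ + L * γ ^ ν * ‖γ⁻¹ • (x - xplus)‖ ^ ν
          + ‖gradient f x - G‖ :=
  normal_cone_stationarity_bound_general 𝒳 ν L f hHolder x hx γ hγ G xplus hxplus hproj
end

section
/- Let 𝒳 ⊆ ℝ^d be a nonempty closed convex set, L > 0, σ > 0, and let f : ℝ^d → ℝ be differentiable with Lipschitz gradient on 𝒳: ‖∇f(y) − ∇f(x)‖ ≤ L‖y − x‖ for all x, y ∈ 𝒳, and f ≥ f* on 𝒳. On a probability space with filtration (𝓕_k), let γ_k > 0 with γ_k ≤ γ̄ for some γ̄ > 0, m_k ≥ 1, x_0 ∈ 𝒳 deterministic, and let (x_k), (G_k) be random sequences in ℝ^d with: x_k 𝓕_k-measurable with values in 𝒳; E[G_k | 𝓕_k] = ∇f(x_k) a.s.; E[‖∇f(x_k) − G_k‖²] ≤ σ²/m_k; E[‖G_k‖²] ≤ σ²; and x_{k+1}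 almost surely the Euclidean projection of x_k − γ_k G_k onto 𝒳. Then for every N ≥ 1, min_{k=0,…,N−1} E[ dist(0, ∇f(x_{k+1}) + N_𝒳(x_{k+1})) ] ≤ [ (1+Lγ̄) √N √( Δ + σ² Σ_{k=0}^{N−1}(γ_k/m_k) + (Lσ²/2) Σ_{k=0}^{N−1} γ_k² ) + σ Σ_{k=0}^{N−1} √(γ_k/m_k) ] / Σ_{k=0}^{N−1} √γ_k, where Δ := f(x_0) − f*. -/
open MeasureTheory InnerProductSpace

/-!
Testing the projection inequality at `x_k` turns each iteration into a descent step up to the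
noise `e_k = ∇f(x_k) - G_k`:
`‖x_{k+1} - x_k‖² / γ_k ≤ f(x_k) - f(x_{k+1}) + ⟪e_k, x_{k+1} - x_k⟫ + (L/2) γ_k² ‖G_k‖²`.
The noise term has mean at most `γ_k E‖e_k‖²`: the noiseless step `Π(x_k - γ_k ∇f(x_k)) - x_k`
is `𝓕_k`-measurable, hence orthogonal in mean to `e_k`, and by nonexpansiveness of the projection
`Π` the actual step differs from it by at most `γ_k ‖e_k‖`. Telescoping bounds
`∑ E‖x_{k+1} - x_k‖² / γ_k`. Since `(x_k - γ_k G_k - x_{k+1}) / γ_k` is a normal vector at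
`x_{k+1}`, the stationarity measure at `x_{k+1}` is at most
`(L + 1/γ_k) ‖x_{k+1} - x_k‖ + ‖e_k‖`; Jensen, averaging with weights `√γ_k` and
Cauchy–Schwarz conclude.
-/

section Geometry

variable {E : Type*} [NormedAddCommGroup E] [InnerProductSpace ℝ E]

def normalCone (𝒳 : Set E) (x : E) : Set E := {u | ∀ y ∈ 𝒳, ⟪u, y - x⟫_ℝ ≤ 0}

theorem sq_norm_sub_le_inner_of_sub_mem_normalCone {𝒳 : Set E} {z w p q : E}
    (hp : p ∈ 𝒳) (hq : q ∈ 𝒳) (hzp : z - p ∈ normalCone 𝒳 p) (hwq : w - q ∈ normalCone 𝒳 q) :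
    ‖p - q‖ ^ 2 ≤ ⟪z - w, p - q⟫_ℝ := by
  have hz := hzp q hq
  have hw := hwq p hp
  have hsplit : ⟪z - w, p - q⟫_ℝ - ‖p - q‖ ^ 2 = -⟪z - p, q - p⟫_ℝ - ⟪w - q, p - q⟫_ℝ := by
    rw [← real_inner_self_eq_norm_sq, ← inner_sub_left, ← inner_neg_right, neg_sub,
      ← inner_sub_left]
    congr 1
    abel
  linarith

theorem norm_sub_le_of_sub_mem_normalCone {𝒳 : Set E} {z w p q : E}
    (hp : p ∈ 𝒳) (hq : q ∈ 𝒳) (hzp : z - p ∈ normalCone 𝒳 p) (hwq : w - q ∈ normalCone 𝒳 q) :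
    ‖p - q‖ ≤ ‖z - w‖ := by
  have h := (sq_norm_sub_le_inner_of_sub_mem_normalCone hp hq hzp hwq).trans
    (real_inner_le_norm (z - w) (p - q))
  rw [sq] at h
  rcases (norm_nonneg (p - q)).eq_or_lt with h0 | h0
  · exact h0 ▸ norm_nonneg _
  · exact le_of_mul_le_mul_right h h0

theorem zero_mem_normalCone (𝒳 : Set E) (x : E) : (0 : E) ∈ normalCone 𝒳 x := fun y _ => by
  simp

theorem exists_lipschitzWith_one_projection [CompleteSpace E] {𝒳 : Set E} (hne : 𝒳.Nonempty)
    (hcl : IsClosed 𝒳) (hconv : Convex ℝ 𝒳) :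
    ∃ proj : E → E, (∀ z, proj z ∈ 𝒳 ∧ z - proj z ∈ normalCone 𝒳 (proj z)) ∧
      LipschitzWith 1 proj := by
  have hex : ∀ z : E, ∃ p, p ∈ 𝒳 ∧ z - p ∈ normalCone 𝒳 p := fun z => by
    obtain ⟨p, hp, hmin⟩ := exists_norm_eq_iInf_of_complete_convex hne hcl.isComplete hconv z
    exact ⟨p, hp, (norm_eq_iInf_iff_real_inner_le_zero hconv hp).mp hmin⟩
  choose proj hproj using hex
  refine ⟨proj, fun z => hproj z, LipschitzWith.of_dist_le_mul fun z w => ?_⟩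
  simpa [dist_eq_norm] using
    norm_sub_le_of_sub_mem_normalCone (hproj z).1 (hproj w).1 (hproj z).2 (hproj w).2

end Geometry

section Descent

variable {E : Type*} [NormedAddCommGroup E] [InnerProductSpace ℝ E] [CompleteSpace E]

theorem Convex.le_add_inner_gradient_add_sq_norm {𝒳 : Set E} (hconv : Convex ℝ 𝒳) {f : E → ℝ}
    (hf : ∀ x ∈ 𝒳, DifferentiableAt ℝ f x) {L : ℝ}
    (hLip : ∀ x ∈ 𝒳, ∀ y ∈ 𝒳, ‖gradient f y - gradient f x‖ ≤ L * ‖y - x‖)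
    {a b : E} (ha : a ∈ 𝒳) (hb : b ∈ 𝒳) :
    f b ≤ f a + ⟪gradient f a, b - a⟫_ℝ + L / 2 * ‖b - a‖ ^ 2 := by
  set v := b - a
  have hseg : ∀ t ∈ Set.Icc (0 : ℝ) 1, a + t • v ∈ 𝒳 := fun t ht => hconv.add_smul_sub_mem ha hb ht
  -- The claim is `φ 1 ≤ φ 0`, and the Lipschitz bound makes `φ' ≤ 0` on `[0, 1]`.
  let φ : ℝ → ℝ := fun t => f (a + t • v) - t * ⟪gradient f a, v⟫_ℝ - L / 2 * ‖v‖ ^ 2 * t ^ 2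
  have hφ : ∀ t ∈ Set.Icc (0 : ℝ) 1, HasDerivAt φ
      (⟪gradient f (a + t • v), v⟫_ℝ - ⟪gradient f a, v⟫_ℝ - L * ‖v‖ ^ 2 * t) t := by
    intro t ht
    have hline : HasDerivAt (fun s : ℝ => a + s • v) v t := by
      simpa using ((hasDerivAt_id t).smul_const v).const_add a
    have hf' := (hf _ (hseg t ht)).hasFDerivAt.comp_hasDerivAt t hline
    rw [← inner_gradient_left] at hf'
    exact ((hf'.sub ((hasDerivAt_id t).mul_const _)).sub
      ((hasDerivAt_pow 2 t).const_mul (L / 2 * ‖v‖ ^ 2))).congr_deriv (by ring)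
  have hanti : AntitoneOn φ (Set.Icc 0 1) := by
    refine antitoneOn_of_deriv_nonpos (convex_Icc 0 1)
      (fun t ht => (hφ t ht).continuousAt.continuousWithinAt)
      (fun t ht => (hφ t (interior_subset ht)).differentiableAt.differentiableWithinAt)
      fun t ht => ?_
    rw [interior_Icc] at ht
    have ht' := Set.Ioo_subset_Icc_self ht
    rw [(hφ t ht').deriv, ← inner_sub_left, sub_nonpos]
    calc ⟪gradient f (a + t • v) - gradient f a, v⟫_ℝ
        ≤ ‖gradient f (a + t • v) - gradient f a‖ * ‖v‖ := real_inner_le_norm _ _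
      _ ≤ L * ‖a + t • v - a‖ * ‖v‖ := by gcongr; exact hLip a ha _ (hseg t ht')
      _ = L * ‖v‖ ^ 2 * t := by
        rw [add_sub_cancel_left, norm_smul, Real.norm_of_nonneg ht.1.le]
        ring
  have hφ0 : φ 0 = f a := by simp [φ]
  have hφ1 : φ 1 = f b - ⟪gradient f a, v⟫_ℝ - L / 2 * ‖v‖ ^ 2 := by simp [φ, v]
  linarith [hanti (Set.left_mem_Icc.2 zero_le_one) (Set.right_mem_Icc.2 zero_le_one) zero_le_one]

end Descent

section ProjectedStep

variable {E : Type*} [NormedAddCommGroup E] [InnerProductSpace ℝ E] {𝒳 : Set E} {x x' g : E}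
  {γ : ℝ}

theorem norm_projected_step_le (hγ : 0 ≤ γ) (hx : x ∈ 𝒳) (hx' : x' ∈ 𝒳)
    (hstep : x - γ • g - x' ∈ normalCone 𝒳 x') : ‖x' - x‖ ≤ γ * ‖g‖ := by
  have h := norm_sub_le_of_sub_mem_normalCone (w := x) hx' hx hstep
    (by simpa using zero_mem_normalCone 𝒳 x)
  rwa [sub_sub_cancel_left, norm_neg, norm_smul, Real.norm_of_nonneg hγ] at h

theorem projected_step_descent [CompleteSpace E] (hconv : Convex ℝ 𝒳) {f : E → ℝ}
    (hf : ∀ x ∈ 𝒳, DifferentiableAt ℝ f x) {L : ℝ} (hL : 0 ≤ L)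
    (hLip : ∀ x ∈ 𝒳, ∀ y ∈ 𝒳, ‖gradient f y - gradient f x‖ ≤ L * ‖y - x‖)
    (hγ : 0 < γ) (hx : x ∈ 𝒳) (hx' : x' ∈ 𝒳) (hstep : x - γ • g - x' ∈ normalCone 𝒳 x') :
    ‖x' - x‖ ^ 2 / γ - ⟪gradient f x - g, x' - x⟫_ℝ - L / 2 * γ ^ 2 * ‖g‖ ^ 2
      ≤ f x - f x' := by
  have hdesc := hconv.le_add_inner_gradient_add_sq_norm hf hLip hx hx'
  have hvi : ‖x' - x‖ ^ 2 + γ * ⟪g, x' - x⟫_ℝ ≤ 0 := by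
    have h := hstep x hx
    rwa [show x - γ • g - x' = -((x' - x) + γ • g) by abel, ← neg_sub x' x, inner_neg_neg,
      inner_add_left, real_inner_smul_left, real_inner_self_eq_norm_sq] at h
  have hdiv : ‖x' - x‖ ^ 2 / γ ≤ -⟪g, x' - x⟫_ℝ := by
    rw [div_le_iff₀ hγ]
    linarith
  have hlen : L / 2 * ‖x' - x‖ ^ 2 ≤ L / 2 * γ ^ 2 * ‖g‖ ^ 2 := by
    rw [mul_assoc, ← mul_pow]
    gcongr
    exact norm_projected_step_le hγ.le hx hx' hstep
  rw [inner_sub_left]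
  linarith

theorem infDist_gradient_add_normalCone_le [CompleteSpace E] {f : E → ℝ} {L : ℝ}
    (hLip : ∀ x ∈ 𝒳, ∀ y ∈ 𝒳, ‖gradient f y - gradient f x‖ ≤ L * ‖y - x‖)
    (hγ : 0 < γ) (hx : x ∈ 𝒳) (hx' : x' ∈ 𝒳) (hstep : x - γ • g - x' ∈ normalCone 𝒳 x') :
    Metric.infDist 0 {v | ∃ u ∈ normalCone 𝒳 x', v = gradient f x' + u}
      ≤ (L + γ⁻¹) * ‖x' - x‖ + ‖gradient f x - g‖ := by
  set u := γ⁻¹ • (x - γ • g - x')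
  have hu : u ∈ normalCone 𝒳 x' := fun y hy => by
    rw [real_inner_smul_left]
    exact mul_nonpos_of_nonneg_of_nonpos (inv_nonneg.2 hγ.le) (hstep y hy)
  have hsplit : gradient f x' + u
      = (gradient f x' - gradient f x) + (gradient f x - g) + γ⁻¹ • (x - x') := by
    simp only [u, smul_sub, smul_smul, inv_mul_cancel₀ hγ.ne', one_smul]
    abel
  calc Metric.infDist 0 {v | ∃ u ∈ normalCone 𝒳 x', v = gradient f x' + u}
      ≤ ‖gradient f x' + u‖ := by
        simpa using Metric.infDist_le_dist_of_mem (x := (0 : E))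
          (show gradient f x' + u ∈ {v | ∃ u ∈ normalCone 𝒳 x', v = gradient f x' + u} from
            ⟨u, hu, rfl⟩)
    _ ≤ ‖gradient f x' - gradient f x‖ + ‖gradient f x - g‖ + ‖γ⁻¹ • (x - x')‖ := by
        rw [hsplit]
        exact norm_add₃_le
    _ ≤ L * ‖x' - x‖ + ‖gradient f x - g‖ + γ⁻¹ * ‖x' - x‖ := by
        rw [norm_smul, Real.norm_of_nonneg (inv_nonneg.2 hγ.le), norm_sub_rev x]
        gcongr
        exact hLip x hx x' hx'
    _ = (L + γ⁻¹) * ‖x' - x‖ + ‖gradient f x - g‖ := by ring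

theorem inner_sub_projected_step_le (hγ : 0 ≤ γ) {G p : E} (hx' : x' ∈ 𝒳) (hp : p ∈ 𝒳)
    (hstep : x - γ • G - x' ∈ normalCone 𝒳 x') (hp𝒳 : x - γ • g - p ∈ normalCone 𝒳 p) :
    ⟪g - G, x' - x⟫_ℝ ≤ ⟪g - G, p - x⟫_ℝ + γ * ‖g - G‖ ^ 2 := by
  have hnonexp : ‖x' - p‖ ≤ γ * ‖g - G‖ := by
    have h := norm_sub_le_of_sub_mem_normalCone hx' hp hstep hp𝒳
    rwa [sub_sub_sub_cancel_left, ← smul_sub, norm_smul, Real.norm_of_nonneg hγ] at h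
  calc ⟪g - G, x' - x⟫_ℝ = ⟪g - G, p - x⟫_ℝ + ⟪g - G, x' - p⟫_ℝ := by
        rw [← inner_add_right, sub_add_sub_cancel']
    _ ≤ ⟪g - G, p - x⟫_ℝ + ‖g - G‖ * (γ * ‖g - G‖) := by
        gcongr
        exact (real_inner_le_norm _ _).trans (by gcongr)
    _ = ⟪g - G, p - x⟫_ℝ + γ * ‖g - G‖ ^ 2 := by ring

end ProjectedStep

section Probability

theorem ContinuousOn.measurable_comp_of_forall_mem {α β γ : Type*} {_ : MeasurableSpace α}
    [TopologicalSpace β] [MeasurableSpace β] [OpensMeasurableSpace β] [TopologicalSpace γ]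
    [MeasurableSpace γ] [BorelSpace γ] {s : Set β} {f : β → γ} (hf : ContinuousOn f s)
    {g : α → β} (hg : Measurable g) (hgs : ∀ a, g a ∈ s) : Measurable fun a => f (g a) :=
  hf.domRestrict.measurable.comp (hg.subtype_mk (h := hgs))

variable {Ω E : Type*} [NormedAddCommGroup E] [InnerProductSpace ℝ E] {m m₀ : MeasurableSpace Ω}
  {μ : Measure Ω}

theorem MeasureTheory.MemLp.integrable_inner {f g : Ω → E} (hf : MemLp f 2 μ)
    (hg : MemLp g 2 μ) : Integrable (fun ω => ⟪f ω, g ω⟫_ℝ) μ :=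
  (L2.integrable_inner (𝕜 := ℝ) (hf.toLp f) (hg.toLp g)).congr <| by
    filter_upwards [hf.coeFn_toLp, hg.coeFn_toLp] with ω hfω hgω
    rw [hfω, hgω]

theorem integral_le_sqrt_integral_sq [IsProbabilityMeasure μ] {X : Ω → ℝ} (hX : MemLp X 2 μ) :
    ∫ ω, X ω ∂μ ≤ √(∫ ω, X ω ^ 2 ∂μ) := by
  refine Real.le_sqrt_of_sq_le ?_
  have h := ProbabilityTheory.variance_nonneg X μ
  rw [ProbabilityTheory.variance_eq_sub hX, sub_nonneg] at h
  simpa using h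

theorem integral_inner_eq_zero_of_condExp_eq_zero [CompleteSpace E] [IsFiniteMeasure μ]
    (hm : m ≤ m₀) {e F : Ω → E} (he : Integrable e μ) (hcond : μ[e|m] =ᵐ[μ] 0)
    (hF : StronglyMeasurable[m] F) (heF : Integrable (fun ω => ⟪e ω, F ω⟫_ℝ) μ) :
    ∫ ω, ⟪e ω, F ω⟫_ℝ ∂μ = 0 := by
  have hpull : μ[fun ω => ⟪e ω, F ω⟫_ℝ|m] =ᵐ[μ] 0 := by
    refine (condExp_bilin_of_stronglyMeasurable_right (innerSL ℝ) hF heF he).trans ?_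
    filter_upwards [hcond] with ω hω
    simp [hω]
  rw [← integral_condExp hm, integral_congr_ae hpull]
  simp

theorem integral_inner_noise_projected_step_le [CompleteSpace E] [IsFiniteMeasure μ]
    (hm : m ≤ m₀) {𝒳 : Set E} (hne : 𝒳.Nonempty) (hcl : IsClosed 𝒳) (hconv : Convex ℝ 𝒳)
    {γ : ℝ} (hγ : 0 ≤ γ) {x x' G g : Ω → E} (hx : StronglyMeasurable[m] x)
    (hg : StronglyMeasurable[m] g) (hx𝒳 : ∀ ω, x ω ∈ 𝒳) (hx'𝒳 : ∀ ω, x' ω ∈ 𝒳)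
    (hstep : ∀ᵐ ω ∂μ, x ω - γ • G ω - x' ω ∈ normalCone 𝒳 (x' ω))
    (he2 : MemLp (g - G) 2 μ) (hG2 : MemLp G 2 μ) (hcond : μ[G|m] =ᵐ[μ] g) :
    ∫ ω, ⟪g ω - G ω, x' ω - x ω⟫_ℝ ∂μ ≤ γ * ∫ ω, ‖g ω - G ω‖ ^ 2 ∂μ := by
  obtain ⟨proj, hproj, hlip⟩ := exists_lipschitzWith_one_projection hne hcl hconv
  have hg2 : MemLp g 2 μ := by simpa using he2.add hG2
  have hcond0 : μ[g - G|m] =ᵐ[μ] 0 := by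
    have hgint := hg2.integrable one_le_two
    filter_upwards [condExp_sub hgint (hG2.integrable one_le_two) m, hcond] with ω hω hGω
    rw [hω, Pi.sub_apply, hGω, condExp_of_stronglyMeasurable hm hg hgint, sub_self, Pi.zero_apply]
  set F : Ω → E := fun ω => proj (x ω - γ • g ω) - x ω
  have hF : StronglyMeasurable[m] F :=
    (hlip.continuous.comp_stronglyMeasurable (hx.sub (hg.const_smul γ))).sub hx
  have hF2 : MemLp F 2 μ := by
    refine (hg2.const_smul γ).of_le (hF.mono hm).aestronglyMeasurable (ae_of_all _ fun ω => ?_)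
    have h := norm_sub_le_of_sub_mem_normalCone (w := x ω) (hproj (x ω - γ • g ω)).1 (hx𝒳 ω)
      (hproj _).2 (by simpa using zero_mem_normalCone 𝒳 (x ω))
    rwa [sub_sub_cancel_left, norm_neg] at h
  have heF : Integrable (fun ω => ⟪g ω - G ω, F ω⟫_ℝ) μ := he2.integrable_inner hF2
  have hmean : ∫ ω, ⟪g ω - G ω, F ω⟫_ℝ ∂μ = 0 :=
    integral_inner_eq_zero_of_condExp_eq_zero hm (he2.integrable one_le_two) hcond0 hF heF
  have hptw : ∀ᵐ ω ∂μ, ⟪g ω - G ω, x' ω - x ω⟫_ℝ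
      ≤ ⟪g ω - G ω, F ω⟫_ℝ + γ * ‖g ω - G ω‖ ^ 2 := by
    filter_upwards [hstep] with ω hω
    exact inner_sub_projected_step_le hγ (hx'𝒳 ω) (hproj _).1 hω (hproj _).2
  by_cases hint : Integrable (fun ω => ⟪g ω - G ω, x' ω - x ω⟫_ℝ) μ
  · have hsq : Integrable (fun ω => ‖g ω - G ω‖ ^ 2) μ := he2.integrable_norm_pow two_ne_zero
    calc ∫ ω, ⟪g ω - G ω, x' ω - x ω⟫_ℝ ∂μ
        ≤ ∫ ω, (⟪g ω - G ω, F ω⟫_ℝ + γ * ‖g ω - G ω‖ ^ 2) ∂μ :=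
          integral_mono_ae hint (heF.add (hsq.const_mul γ)) hptw
      _ = γ * ∫ ω, ‖g ω - G ω‖ ^ 2 ∂μ := by
          rw [integral_add heF (hsq.const_mul γ), hmean, zero_add,
            integral_const_mul]
  · rw [integral_undef hint]
    exact mul_nonneg hγ (integral_nonneg fun ω => sq_nonneg _)

theorem sum_integral_le_of_telescoping [IsProbabilityMeasure μ] {T a : ℕ → Ω → ℝ}
    (hT : ∀ k, Integrable (T k) μ) (hTa : ∀ k, ∀ᵐ ω ∂μ, T k ω ≤ a k ω - a (k + 1) ω)
    {c b : ℝ} (ha0 : ∀ ω, a 0 ω = c) (N : ℕ) (haN : ∀ ω, b ≤ a N ω) :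
    ∑ k ∈ Finset.range N, ∫ ω, T k ω ∂μ ≤ c - b := by
  have hsum : ∀ᵐ ω ∂μ, ∑ k ∈ Finset.range N, T k ω ≤ c - b := by
    filter_upwards [ae_all_iff.2 hTa] with ω hω
    calc ∑ k ∈ Finset.range N, T k ω ≤ ∑ k ∈ Finset.range N, (a k ω - a (k + 1) ω) :=
          Finset.sum_le_sum fun k _ => hω k
      _ = a 0 ω - a N ω := Finset.sum_range_sub' (fun k => a k ω) N
      _ ≤ c - b := by linarith [ha0 ω, haN ω]
  rw [← integral_finsetSum _ fun k _ => hT k]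
  simpa using integral_mono_ae (integrable_finsetSum _ fun k _ => hT k)
    (integrable_const (c - b)) hsum

end Probability

section Iteration

variable {Ω E : Type*} [NormedAddCommGroup E] [InnerProductSpace ℝ E] {m₀ : MeasurableSpace Ω}
  {μ : Measure Ω}

theorem memLp_two_projected_step {𝒳 : Set E} {γ : ℝ} (hγ : 0 ≤ γ) {x x' G : Ω → E}
    (hx : AEStronglyMeasurable x μ) (hx' : AEStronglyMeasurable x' μ) (hx𝒳 : ∀ ω, x ω ∈ 𝒳)
    (hx'𝒳 : ∀ ω, x' ω ∈ 𝒳) (hstep : ∀ᵐ ω ∂μ, x ω - γ • G ω - x' ω ∈ normalCone 𝒳 (x' ω))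
    (hG2 : MemLp G 2 μ) : MemLp (x' - x) 2 μ := by
  refine (hG2.const_smul γ).of_le (hx'.sub hx) ?_
  filter_upwards [hstep] with ω hω
  rw [Pi.smul_apply, norm_smul, Real.norm_of_nonneg hγ]
  exact norm_projected_step_le hγ (hx𝒳 ω) (hx'𝒳 ω) hω

theorem integral_infDist_gradient_add_normalCone_le [CompleteSpace E] [IsProbabilityMeasure μ]
    {𝒳 : Set E} {f : E → ℝ} {L : ℝ} (hL : 0 ≤ L)
    (hLip : ∀ x ∈ 𝒳, ∀ y ∈ 𝒳, ‖gradient f y - gradient f x‖ ≤ L * ‖y - x‖)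
    {γ : ℝ} (hγ : 0 < γ) {x x' G : Ω → E} (hx : AEStronglyMeasurable x μ)
    (hx' : AEStronglyMeasurable x' μ) (hx𝒳 : ∀ ω, x ω ∈ 𝒳) (hx'𝒳 : ∀ ω, x' ω ∈ 𝒳)
    (hstep : ∀ᵐ ω ∂μ, x ω - γ • G ω - x' ω ∈ normalCone 𝒳 (x' ω)) (hG2 : MemLp G 2 μ)
    (he2 : MemLp (fun ω => gradient f (x ω) - G ω) 2 μ) :
    ∫ ω, Metric.infDist 0 {v | ∃ u ∈ normalCone 𝒳 (x' ω), v = gradient f (x' ω) + u} ∂μ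
      ≤ (L + γ⁻¹) * √(∫ ω, ‖x' ω - x ω‖ ^ 2 ∂μ) + √(∫ ω, ‖gradient f (x ω) - G ω‖ ^ 2 ∂μ) := by
  have hd2 := memLp_two_projected_step hγ.le hx hx' hx𝒳 hx'𝒳 hstep hG2
  have hd1 : Integrable (fun ω => ‖x' ω - x ω‖) μ := (hd2.integrable one_le_two).norm
  have he1 : Integrable (fun ω => ‖gradient f (x ω) - G ω‖) μ := (he2.integrable one_le_two).norm
  calc ∫ ω, Metric.infDist 0 {v | ∃ u ∈ normalCone 𝒳 (x' ω), v = gradient f (x' ω) + u} ∂μ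
      ≤ ∫ ω, ((L + γ⁻¹) * ‖x' ω - x ω‖ + ‖gradient f (x ω) - G ω‖) ∂μ := by
        refine integral_mono_of_nonneg (ae_of_all _ fun ω => Metric.infDist_nonneg)
          ((hd1.const_mul _).add he1) ?_
        filter_upwards [hstep] with ω hω
        exact infDist_gradient_add_normalCone_le hLip hγ (hx𝒳 ω) (hx'𝒳 ω) hω
    _ = (L + γ⁻¹) * ∫ ω, ‖x' ω - x ω‖ ∂μ + ∫ ω, ‖gradient f (x ω) - G ω‖ ∂μ := by
        rw [integral_add (hd1.const_mul _) he1, integral_const_mul]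
    _ ≤ (L + γ⁻¹) * √(∫ ω, ‖x' ω - x ω‖ ^ 2 ∂μ)
          + √(∫ ω, ‖gradient f (x ω) - G ω‖ ^ 2 ∂μ) :=
        add_le_add (mul_le_mul_of_nonneg_left (integral_le_sqrt_integral_sq hd2.norm)
          (add_nonneg hL (inv_nonneg.2 hγ.le))) (integral_le_sqrt_integral_sq he2.norm)

theorem sum_integral_sq_norm_projected_step_div_le [CompleteSpace E] [IsProbabilityMeasure μ]
    {𝒳 : Set E} (hne : 𝒳.Nonempty) (hcl : IsClosed 𝒳) (hconv : Convex ℝ 𝒳) {f : E → ℝ}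
    (hf : ∀ x ∈ 𝒳, DifferentiableAt ℝ f x) {L : ℝ} (hL : 0 ≤ L)
    (hLip : ∀ x ∈ 𝒳, ∀ y ∈ 𝒳, ‖gradient f y - gradient f x‖ ≤ L * ‖y - x‖)
    {fstar : ℝ} (hfstar : ∀ x ∈ 𝒳, fstar ≤ f x) (ℱ : Filtration ℕ m₀) {γ : ℕ → ℝ}
    (hγ : ∀ k, 0 < γ k) {x G : ℕ → Ω → E} {x0 : E} (hx0 : ∀ ω, x 0 ω = x0)
    (hxmeas : ∀ k, StronglyMeasurable[ℱ k] (x k))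
    (hgmeas : ∀ k, StronglyMeasurable[ℱ k] fun ω => gradient f (x k ω))
    (hxmem : ∀ k ω, x k ω ∈ 𝒳) (hGcond : ∀ k, μ[G k|ℱ k] =ᵐ[μ] fun ω => gradient f (x k ω))
    (hproj : ∀ k, ∀ᵐ ω ∂μ, x k ω - γ k • G k ω - x (k + 1) ω ∈ normalCone 𝒳 (x (k + 1) ω))
    (hG2 : ∀ k, MemLp (G k) 2 μ) (he2 : ∀ k, MemLp (fun ω => gradient f (x k ω) - G k ω) 2 μ)
    {v M : ℕ → ℝ} (hvar : ∀ k, ∫ ω, ‖gradient f (x k ω) - G k ω‖ ^ 2 ∂μ ≤ v k)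
    (hmom : ∀ k, ∫ ω, ‖G k ω‖ ^ 2 ∂μ ≤ M k) (N : ℕ) :
    ∑ k ∈ Finset.range N, (∫ ω, ‖x (k + 1) ω - x k ω‖ ^ 2 ∂μ) / γ k
      ≤ f x0 - fstar + ∑ k ∈ Finset.range N, (γ k * v k + L / 2 * γ k ^ 2 * M k) := by
  have hd2 : ∀ k, MemLp (x (k + 1) - x k) 2 μ := fun k =>
    memLp_two_projected_step (hγ k).le ((hxmeas k).mono (ℱ.le k)).aestronglyMeasurable
      ((hxmeas (k + 1)).mono (ℱ.le _)).aestronglyMeasurable (hxmem k) (hxmem (k + 1)) (hproj k)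
      (hG2 k)
  have hsq : ∀ k, Integrable (fun ω => ‖x (k + 1) ω - x k ω‖ ^ 2) μ := fun k =>
    (hd2 k).integrable_norm_pow two_ne_zero
  have hinner : ∀ k, Integrable
      (fun ω => ⟪gradient f (x k ω) - G k ω, x (k + 1) ω - x k ω⟫_ℝ) μ := fun k =>
    (he2 k).integrable_inner (hd2 k)
  have hGsq : ∀ k, Integrable (fun ω => ‖G k ω‖ ^ 2) μ := fun k =>
    (hG2 k).integrable_norm_pow two_ne_zero
  have htel := sum_integral_le_of_telescoping (μ := μ)
    (T := fun k ω => ‖x (k + 1) ω - x k ω‖ ^ 2 / γ k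
      - ⟪gradient f (x k ω) - G k ω, x (k + 1) ω - x k ω⟫_ℝ - L / 2 * γ k ^ 2 * ‖G k ω‖ ^ 2)
    (a := fun k ω => f (x k ω))
    (fun k => (((hsq k).div_const _).sub (hinner k)).sub ((hGsq k).const_mul _))
    (fun k => by
      filter_upwards [hproj k] with ω hω
      exact projected_step_descent hconv hf hL hLip (hγ k) (hxmem k ω) (hxmem (k + 1) ω) hω)
    (fun ω => by rw [hx0]) N (fun ω => hfstar _ (hxmem N ω))
  have hnoise : ∀ k, ∫ ω, ⟪gradient f (x k ω) - G k ω, x (k + 1) ω - x k ω⟫_ℝ ∂μ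
      ≤ γ k * ∫ ω, ‖gradient f (x k ω) - G k ω‖ ^ 2 ∂μ := fun k =>
    integral_inner_noise_projected_step_le (ℱ.le k) hne hcl hconv (hγ k).le (hxmeas k) (hgmeas k)
      (hxmem k) (hxmem (k + 1)) (hproj k) (he2 k) (hG2 k) (hGcond k)
  refine (Finset.sum_le_sum fun k _ => ?_).trans ((Finset.sum_add_distrib).trans_le
    (add_le_add_left htel _))
  have hdiv : Integrable (fun ω => ‖x (k + 1) ω - x k ω‖ ^ 2 / γ k) μ := (hsq k).div_const _
  have hdiff : Integrable (fun ω => ‖x (k + 1) ω - x k ω‖ ^ 2 / γ k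
      - ⟪gradient f (x k ω) - G k ω, x (k + 1) ω - x k ω⟫_ℝ) μ := hdiv.sub (hinner k)
  rw [integral_sub hdiff ((hGsq k).const_mul _), integral_sub hdiv (hinner k), integral_div,
    integral_const_mul]
  have hvar' := mul_le_mul_of_nonneg_left (hvar k) (hγ k).le
  have hmom' := mul_le_mul_of_nonneg_left (hmom k) (by positivity : 0 ≤ L / 2 * γ k ^ 2)
  linarith [hnoise k]

end Iteration

section Averaging

theorem Finset.inf'_le_sum_mul_div_sum {ι : Type*} {s : Finset ι} (hs : s.Nonempty) (a : ι → ℝ)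
    {w : ι → ℝ} (hw : ∀ i ∈ s, 0 ≤ w i) (hW : 0 < ∑ i ∈ s, w i) :
    s.inf' hs a ≤ (∑ i ∈ s, w i * a i) / ∑ i ∈ s, w i := by
  rw [le_div_iff₀ hW, Finset.mul_sum]
  exact Finset.sum_le_sum fun i hi => by
    rw [mul_comm]
    exact mul_le_mul_of_nonneg_left (Finset.inf'_le a hi) (hw i hi)

theorem Real.sum_sqrt_le_sqrt_card_mul_sqrt_sum {ι : Type*} (s : Finset ι) {c : ι → ℝ}
    (hc : ∀ i, 0 ≤ c i) : ∑ i ∈ s, √(c i) ≤ √(s.card : ℝ) * √(∑ i ∈ s, c i) := by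
  simpa using Real.sum_sqrt_mul_sqrt_le s (fun _ => zero_le_one) hc

theorem sum_sqrt_mul_step_bound_le {N : ℕ} {L γbar S : ℝ} {γ D : ℕ → ℝ} (hL : 0 ≤ L)
    (hγ : ∀ k, 0 < γ k) (hγle : ∀ k, γ k ≤ γbar) (hD : ∀ k, 0 ≤ D k)
    (hS : ∑ k ∈ Finset.range N, D k / γ k ≤ S) :
    ∑ k ∈ Finset.range N, √(γ k) * ((L + (γ k)⁻¹) * √(D k)) ≤ (1 + L * γbar) * √N * √S := by
  have hterm : ∀ k, √(γ k) * ((L + (γ k)⁻¹) * √(D k)) = (L * γ k + 1) * √(D k / γ k) := by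
    intro k
    rw [Real.sqrt_div (hD k), ← mul_div_assoc, eq_div_iff (Real.sqrt_pos.2 (hγ k)).ne']
    calc √(γ k) * ((L + (γ k)⁻¹) * √(D k)) * √(γ k)
        = (√(γ k) * √(γ k)) * (L + (γ k)⁻¹) * √(D k) := by ring
      _ = (L * γ k + 1) * √(D k) := by
        rw [Real.mul_self_sqrt (hγ k).le, mul_add, mul_inv_cancel₀ (hγ k).ne', mul_comm (γ k)]
  have hc : 0 ≤ 1 + L * γbar := by nlinarith [hγ 0, hγle 0]
  calc ∑ k ∈ Finset.range N, √(γ k) * ((L + (γ k)⁻¹) * √(D k))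
      ≤ ∑ k ∈ Finset.range N, (1 + L * γbar) * √(D k / γ k) := by
        refine Finset.sum_le_sum fun k _ => ?_
        rw [hterm, add_comm]
        gcongr
        exact hγle k
    _ ≤ (1 + L * γbar) * (√N * √(∑ k ∈ Finset.range N, D k / γ k)) := by
        rw [← Finset.mul_sum]
        gcongr
        simpa using Real.sum_sqrt_le_sqrt_card_mul_sqrt_sum (Finset.range N)
          fun k => div_nonneg (hD k) (hγ k).le
    _ ≤ (1 + L * γbar) * √N * √S := by
        rw [mul_assoc]
        gcongr

theorem inf'_range_le_of_step_bounds {N : ℕ} (hN : (Finset.range N).Nonempty)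
    {a γ D m : ℕ → ℝ} {L γbar σ S : ℝ} (hL : 0 ≤ L) (hσ : 0 ≤ σ) (hγ : ∀ k, 0 < γ k)
    (hγle : ∀ k, γ k ≤ γbar) (hD : ∀ k, 0 ≤ D k) (hS : ∑ k ∈ Finset.range N, D k / γ k ≤ S)
    (ha : ∀ k, a k ≤ (L + (γ k)⁻¹) * √(D k) + √(σ ^ 2 / m k)) :
    (Finset.range N).inf' hN a
      ≤ ((1 + L * γbar) * √N * √S + σ * ∑ k ∈ Finset.range N, √(γ k / m k))
        / ∑ k ∈ Finset.range N, √(γ k) := by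
  have hnoise : ∀ k, √(γ k) * √(σ ^ 2 / m k) = σ * √(γ k / m k) := fun k => by
    rw [← Real.sqrt_mul (hγ k).le, show γ k * (σ ^ 2 / m k) = σ ^ 2 * (γ k / m k) by ring,
      Real.sqrt_mul (sq_nonneg σ), Real.sqrt_sq hσ]
  refine (Finset.inf'_le_sum_mul_div_sum hN a (fun k _ => Real.sqrt_nonneg _)
    (Finset.sum_pos (fun k _ => Real.sqrt_pos.2 (hγ k)) hN)).trans ?_
  gcongr
  calc ∑ k ∈ Finset.range N, √(γ k) * a k
      ≤ ∑ k ∈ Finset.range N, (√(γ k) * ((L + (γ k)⁻¹) * √(D k)) + σ * √(γ k / m k)) :=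
        Finset.sum_le_sum fun k _ => by
          rw [← hnoise, ← mul_add]
          exact mul_le_mul_of_nonneg_left (ha k) (Real.sqrt_nonneg _)
    _ ≤ (1 + L * γbar) * √N * √S + σ * ∑ k ∈ Finset.range N, √(γ k / m k) := by
        rw [Finset.sum_add_distrib, ← Finset.mul_sum]
        gcongr
        exact sum_sqrt_mul_step_bound_le hL hγ hγle hD hS

end Averaging

theorem spg_convergence_lipschitz_general
    {Ω : Type*} {m0 : MeasurableSpace Ω} (P : Measure Ω) [IsProbabilityMeasure P]
    {d : ℕ} (𝒳 : Set (EuclideanSpace ℝ (Fin d)))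
    (h𝒳ne : 𝒳.Nonempty) (h𝒳closed : IsClosed 𝒳) (h𝒳conv : Convex ℝ 𝒳)
    (L : ℝ) (hL : 0 < L) (σ : ℝ) (hσ : 0 < σ)
    (f : EuclideanSpace ℝ (Fin d) → ℝ) (hf : Differentiable ℝ f)
    (hLip : ∀ x ∈ 𝒳, ∀ y ∈ 𝒳, ‖gradient f y - gradient f x‖ ≤ L * ‖y - x‖)
    (fstar : ℝ) (hfstar : ∀ x ∈ 𝒳, fstar ≤ f x)
    (ℱ : Filtration ℕ m0)
    (γ : ℕ → ℝ) (hγ : ∀ k, 0 < γ k)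
    (γbar : ℝ) (hγle : ∀ k, γ k ≤ γbar)
    (mb : ℕ → ℕ)
    (x G : ℕ → Ω → EuclideanSpace ℝ (Fin d))
    (x0 : EuclideanSpace ℝ (Fin d)) (hx0 : ∀ ω, x 0 ω = x0)
    (hxmeas : ∀ k, Measurable[ℱ k] (x k))
    (hxmem : ∀ k ω, x k ω ∈ 𝒳)
    (hGint : ∀ k, Integrable (G k) P)
    (hGcond : ∀ k, P[G k|ℱ k] =ᵐ[P] fun ω => gradient f (x k ω))
    (hGvarInt : ∀ k, Integrable (fun ω => ‖gradient f (x k ω) - G k ω‖ ^ 2) P)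
    (hGvar : ∀ k, ∫ ω, ‖gradient f (x k ω) - G k ω‖ ^ 2 ∂P ≤ σ ^ 2 / mb k)
    (hGmomInt : ∀ k, Integrable (fun ω => ‖G k ω‖ ^ 2) P)
    (hGmom : ∀ k, ∫ ω, ‖G k ω‖ ^ 2 ∂P ≤ σ ^ 2)
    (hproj : ∀ k, ∀ᵐ ω ∂P,
      ∀ y ∈ 𝒳, ⟪(x k ω - γ k • G k ω) - x (k + 1) ω, y - x (k + 1) ω⟫_ℝ ≤ 0)
    (N : ℕ) (hN : 1 ≤ N) :
    Finset.inf' (Finset.range N) (Finset.nonempty_range_iff.mpr (Nat.one_le_iff_ne_zero.mp hN))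
      (fun k => ∫ ω, Metric.infDist (0 : EuclideanSpace ℝ (Fin d))
        {v | ∃ u, (∀ y ∈ 𝒳, ⟪u, y - x (k + 1) ω⟫_ℝ ≤ 0)
          ∧ v = gradient f (x (k + 1) ω) + u} ∂P)
      ≤ ((1 + L * γbar) * Real.sqrt N
          * Real.sqrt ((f x0 - fstar) + σ ^ 2 * ∑ k ∈ Finset.range N, γ k / mb k
              + L * σ ^ 2 / 2 * ∑ k ∈ Finset.range N, γ k ^ 2)
         + σ * ∑ k ∈ Finset.range N, Real.sqrt (γ k / mb k))
        / ∑ k ∈ Finset.range N, Real.sqrt (γ k) := by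
  have hgrad : ContinuousOn (gradient f) 𝒳 :=
    (LipschitzOnWith.of_dist_le' fun a ha b hb => by
      simpa only [dist_eq_norm] using hLip b hb a ha).continuousOn
  have hgmeas : ∀ k, Measurable[ℱ k] fun ω => gradient f (x k ω) := fun k =>
    hgrad.measurable_comp_of_forall_mem (hxmeas k) (hxmem k)
  have hxae : ∀ k, AEStronglyMeasurable (x k) P := fun k =>
    ((hxmeas k).mono (ℱ.le k) le_rfl).aestronglyMeasurable
  have hG2 : ∀ k, MemLp (G k) 2 P := fun k =>
    (memLp_two_iff_integrable_sq_norm (hGint k).1).2 (hGmomInt k)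
  have he2 : ∀ k, MemLp (fun ω => gradient f (x k ω) - G k ω) 2 P := fun k =>
    (memLp_two_iff_integrable_sq_norm
      (((hgmeas k).mono (ℱ.le k) le_rfl).aestronglyMeasurable.sub (hGint k).1)).2 (hGvarInt k)
  have hS := sum_integral_sq_norm_projected_step_div_le h𝒳ne h𝒳closed h𝒳conv (fun x _ => hf x)
    hL.le hLip hfstar ℱ hγ hx0 (fun k => (hxmeas k).stronglyMeasurable)
    (fun k => (hgmeas k).stronglyMeasurable) hxmem hGcond hproj hG2 he2 hGvar hGmom N
  refine inf'_range_le_of_step_bounds _ hL.le hσ.le hγ hγle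
    (fun k => integral_nonneg fun _ => sq_nonneg _) (hS.trans_eq ?_) fun k => ?_
  · rw [Finset.sum_add_distrib, add_assoc, Finset.mul_sum, Finset.mul_sum]
    congr 2 <;> exact Finset.sum_congr rfl fun k _ => by ring
  · exact (integral_infDist_gradient_add_normalCone_le hL.le hLip (hγ k) (hxae k) (hxae (k + 1))
      (hxmem k) (hxmem (k + 1)) (hproj k) (hG2 k) (he2 k)).trans (by gcongr; exact hGvar k)

/-- Convergence theorem (case ν = 1, Lipschitz gradient) for the mini-batch stochastic
projected gradient method. -/
theorem spg_convergence_lipschitz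
    {Ω : Type*} {m0 : MeasurableSpace Ω} (P : Measure Ω) [IsProbabilityMeasure P]
    {d : ℕ} (𝒳 : Set (EuclideanSpace ℝ (Fin d)))
    (h𝒳ne : 𝒳.Nonempty) (h𝒳closed : IsClosed 𝒳) (h𝒳conv : Convex ℝ 𝒳)
    (L : ℝ) (hL : 0 < L) (σ : ℝ) (hσ : 0 < σ)
    (f : EuclideanSpace ℝ (Fin d) → ℝ) (hf : Differentiable ℝ f)
    (hLip : ∀ x ∈ 𝒳, ∀ y ∈ 𝒳, ‖gradient f y - gradient f x‖ ≤ L * ‖y - x‖)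
    (fstar : ℝ) (hfstar : ∀ x ∈ 𝒳, fstar ≤ f x)
    (ℱ : Filtration ℕ m0)
    (γ : ℕ → ℝ) (hγ : ∀ k, 0 < γ k)
    (γbar : ℝ) (hγbar : 0 < γbar) (hγle : ∀ k, γ k ≤ γbar)
    (mb : ℕ → ℕ) (hmb : ∀ k, 1 ≤ mb k)
    (x G : ℕ → Ω → EuclideanSpace ℝ (Fin d))
    (x0 : EuclideanSpace ℝ (Fin d)) (hx0 : ∀ ω, x 0 ω = x0)
    (hxmeas : ∀ k, Measurable[ℱ k] (x k))
    (hxmem : ∀ k ω, x k ω ∈ 𝒳)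
    (hGint : ∀ k, Integrable (G k) P)
    (hGcond : ∀ k, P[G k|ℱ k] =ᵐ[P] fun ω => gradient f (x k ω))
    (hGvarInt : ∀ k, Integrable (fun ω => ‖gradient f (x k ω) - G k ω‖ ^ 2) P)
    (hGvar : ∀ k, ∫ ω, ‖gradient f (x k ω) - G k ω‖ ^ 2 ∂P ≤ σ ^ 2 / mb k)
    (hGmomInt : ∀ k, Integrable (fun ω => ‖G k ω‖ ^ 2) P)
    (hGmom : ∀ k, ∫ ω, ‖G k ω‖ ^ 2 ∂P ≤ σ ^ 2)
    (hproj : ∀ k, ∀ᵐ ω ∂P,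
      ∀ y ∈ 𝒳, ⟪(x k ω - γ k • G k ω) - x (k + 1) ω, y - x (k + 1) ω⟫_ℝ ≤ 0)
    (N : ℕ) (hN : 1 ≤ N) :
    Finset.inf' (Finset.range N) (Finset.nonempty_range_iff.mpr (Nat.one_le_iff_ne_zero.mp hN))
      (fun k => ∫ ω, Metric.infDist (0 : EuclideanSpace ℝ (Fin d))
        {v | ∃ u, (∀ y ∈ 𝒳, ⟪u, y - x (k + 1) ω⟫_ℝ ≤ 0)
          ∧ v = gradient f (x (k + 1) ω) + u} ∂P)
      ≤ ((1 + L * γbar) * Real.sqrt N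
          * Real.sqrt ((f x0 - fstar) + σ ^ 2 * ∑ k ∈ Finset.range N, γ k / mb k
              + L * σ ^ 2 / 2 * ∑ k ∈ Finset.range N, γ k ^ 2)
         + σ * ∑ k ∈ Finset.range N, Real.sqrt (γ k / mb k))
        / ∑ k ∈ Finset.range N, Real.sqrt (γ k) :=
  spg_convergence_lipschitz_general P 𝒳 h𝒳ne h𝒳closed h𝒳conv L hL σ hσ f hf hLip fstar hfstar ℱ γ hγ
    γbar hγle mb x G x0 hx0 hxmeas hxmem hGint hGcond hGvarInt hGvar hGmomInt hGmom hproj N hN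
end
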